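/- Derivability of a single negative formula via one-step asynchronous phase is equivalent to small-step LKF: ⊢ Θ ⇑ A is derivable in LKF if and only if for every negative decomposition Δ ⊩⁻ A, the sequent ⊢ Θ,Δ ⇑ · is derivable. -/
import Mathlib


/-- Polarised classical formulae: positive/negative atoms, and
positive (`andP`,`orP`) and negative (`andN`,`orN`) connectives. -/
inductive PForm (At : Type) : Type
  | pos : At → PForm At
  | neg : At → PForm At
  | andP : PForm At → PForm At → PForm At
  | orP : PForm At → PForm At → PForm At
  | andN : PForm At → PForm At → PForm At
  | orN : PForm At → PForm At → PForm At
  deriving DecidableEq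

namespace PForm

/-- Involutive negation on polarised formulae. -/
def pneg {At : Type} : PForm At → PForm At
  | .pos a => .neg a
  | .neg a => .pos a
  | .andP A B => .orN A.pneg B.pneg
  | .orP A B => .andN A.pneg B.pneg
  | .andN A B => .orP A.pneg B.pneg
  | .orN A B => .andP A.pneg B.pneg

/-- `A` is a positive formula. -/
def isPos {At : Type} : PForm At → Prop
  | .pos _ => True
  | .andP _ _ => True
  | .orP _ _ => True
  | _ => False

/-- `A` is a negative formula. -/
def isNeg {At : Type} : PForm At → Prop
  | .neg _ => True
  | .andN _ _ => True
  | .orN _ _ => True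
  | _ => False

end PForm
/-- Negative decomposition relation `Δ ⊩⁻ A` on multisets of formulae. -/
inductive DecN {At : Type} : Multiset (PForm At) → PForm At → Prop
  | shift {P : PForm At} : P.isPos → DecN {P} P
  | atom (a : At) : DecN {PForm.neg a} (.neg a)
  | andN₁ {Δ : Multiset (PForm At)} {A₁ A₂ : PForm At} :
      DecN Δ A₁ → DecN Δ (.andN A₁ A₂)
  | andN₂ {Δ : Multiset (PForm At)} {A₁ A₂ : PForm At} :
      DecN Δ A₂ → DecN Δ (.andN A₁ A₂)
  | orN {Δ₁ Δ₂ : Multiset (PForm At)} {A₁ A₂ : PForm At} :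
      DecN Δ₁ A₁ → DecN Δ₂ A₂ → DecN (Δ₁ + Δ₂) (.orN A₁ A₂)
mutual
/-- Focussed sequents `⊢ Θ ⇓ A` of Liang–Miller's LKF. -/
inductive FocS {At : Type} : Multiset (PForm At) → PForm At → Prop
  | andP {Θ : Multiset (PForm At)} {A₁ A₂ : PForm At} :
      FocS Θ A₁ → FocS Θ A₂ → FocS Θ (.andP A₁ A₂)
  | orP₁ {Θ : Multiset (PForm At)} {A₁ A₂ : PForm At} :
      FocS Θ A₁ → FocS Θ (.orP A₁ A₂)
  | orP₂ {Θ : Multiset (PForm At)} {A₁ A₂ : PForm At} :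
      FocS Θ A₂ → FocS Θ (.orP A₁ A₂)
  | release {Θ : Multiset (PForm At)} {N : PForm At} :
      N.isNeg → UnfS Θ {N} → FocS Θ N
  | init {Θ : Multiset (PForm At)} {a : At} :
      PForm.neg a ∈ Θ → FocS Θ (.pos a)
/-- Unfocussed sequents `⊢ Θ ⇑ Γ` of Liang–Miller's LKF. -/
inductive UnfS {At : Type} : Multiset (PForm At) → Multiset (PForm At) → Prop
  | andN {Θ Γ : Multiset (PForm At)} {A₁ A₂ : PForm At} :
      UnfS Θ (A₁ ::ₘ Γ) → UnfS Θ (A₂ ::ₘ Γ) → UnfS Θ (PForm.andN A₁ A₂ ::ₘ Γ)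
  | orN {Θ Γ : Multiset (PForm At)} {A₁ A₂ : PForm At} :
      UnfS Θ (A₁ ::ₘ A₂ ::ₘ Γ) → UnfS Θ (PForm.orN A₁ A₂ ::ₘ Γ)
  | store {Θ Γ : Multiset (PForm At)} {P : PForm At} :
      (P.isPos ∨ ∃ a : At, P = .neg a) → UnfS (P ::ₘ Θ) Γ → UnfS Θ (P ::ₘ Γ)
  | decide {Θ : Multiset (PForm At)} {P : PForm At} :
      P ∈ Θ → P.isPos → FocS Θ P → UnfS Θ 0
end


section Aux
variable {At : Type}

/-- Size measure on polarised formulae. -/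
def PForm.size : PForm At → ℕ
  | .pos _ => 1
  | .neg _ => 1
  | .andP A B => A.size + B.size + 1
  | .orP A B => A.size + B.size + 1
  | .andN A B => A.size + B.size + 1
  | .orN A B => A.size + B.size + 1

/-- Negative decomposition of a whole multiset. -/
inductive DecG : Multiset (PForm At) → Multiset (PForm At) → Prop
  | nil : DecG 0 0
  | cons {Δ₁ Δ Γ : Multiset (PForm At)} {A : PForm At} :
      DecN Δ₁ A → DecG Δ Γ → DecG (Δ₁ + Δ) (A ::ₘ Γ)

lemma decG_zero_inv {Δ : Multiset (PForm At)} (h : DecG Δ (0 : Multiset (PForm At))) :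
    Δ = 0 := by
  generalize hΓ : (0 : Multiset (PForm At)) = E at h
  cases h with
  | nil => rfl
  | cons _ _ => exact absurd hΓ.symm (Multiset.cons_ne_zero)

lemma decG_cons_inv {Δ Γ : Multiset (PForm At)} {A : PForm At}
    (h : DecG Δ (A ::ₘ Γ)) :
    ∃ Δ₁ Δ₂, DecN Δ₁ A ∧ DecG Δ₂ Γ ∧ Δ = Δ₁ + Δ₂ := by
  generalize hΓ : A ::ₘ Γ = Γ' at h
  induction h generalizing A Γ with
  | nil => simp at hΓ
  | @cons Δ₁ Δ Γ₀ B h1 h2 ih =>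
    rcases Multiset.cons_eq_cons.mp hΓ with ⟨rfl, rfl⟩ | ⟨hne, cs, hΓeq, hΓ₀⟩
    · exact ⟨Δ₁, Δ, h1, h2, rfl⟩
    · obtain ⟨Δa, Δb, ha, hb, rfl⟩ := ih hΓ₀.symm
      refine ⟨Δa, Δ₁ + Δb, ha, ?_, ?_⟩
      · have : DecG (Δ₁ + Δb) (B ::ₘ cs) := DecG.cons h1 hb
        rwa [hΓeq]
      · abel

lemma decN_of_pos_or_atom {Δ : Multiset (PForm At)} {P : PForm At}
    (hP : P.isPos ∨ ∃ a : At, P = .neg a) (h : DecN Δ P) : Δ = {P} := by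
  cases h with
  | shift _ => rfl
  | atom a => rfl
  | andN₁ _ => rcases hP with h | ⟨a, h⟩ <;> simp [PForm.isPos] at h
  | andN₂ _ => rcases hP with h | ⟨a, h⟩ <;> simp [PForm.isPos] at h
  | orN _ _ => rcases hP with h | ⟨a, h⟩ <;> simp [PForm.isPos] at h

lemma unfS_forward {Θ Γ : Multiset (PForm At)} (h : UnfS Θ Γ) :
    ∀ Δ, DecG Δ Γ → UnfS (Θ + Δ) 0 := by
  refine UnfS.rec (motive_1 := fun _ _ _ => True)
    (motive_2 := fun Θ Γ _ => ∀ Δ, DecG Δ Γ → UnfS (Θ + Δ) 0)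
    (fun _ _ _ _ => trivial) (fun _ _ => trivial) (fun _ _ => trivial)
    (fun _ _ _ => trivial) (fun _ => trivial) ?andN ?orN ?store ?decide h
  case andN =>
    intro Θ Γ A₁ A₂ h1 h2 ih1 ih2 Δ hd
    obtain ⟨Δ₁, Δ₂, hn, hg, rfl⟩ := decG_cons_inv hd
    cases hn with
    | shift hp => simp [PForm.isPos] at hp
    | andN₁ h => exact ih1 _ (DecG.cons h hg)
    | andN₂ h => exact ih2 _ (DecG.cons h hg)
  case orN =>
    intro Θ Γ A₁' A₂' h1 ih Δ hd
    obtain ⟨Δ₁, Δ₂, hn, hg, rfl⟩ := decG_cons_inv hd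
    cases hn with
    | shift hp => simp [PForm.isPos] at hp
    | @orN Δa Δb A₁ A₂ ha hb =>
      have := ih _ (DecG.cons ha (DecG.cons hb hg))
      rwa [show Θ + (Δa + (Δb + Δ₂)) = Θ + (Δa + Δb + Δ₂) by abel] at this
  case store =>
    intro Θ' Γ' P hP h ih Δ hd
    obtain ⟨Δ₁, Δ₂, hn, hg, rfl⟩ := decG_cons_inv hd
    have hΔ₁ : Δ₁ = {P} := decN_of_pos_or_atom hP hn
    subst hΔ₁
    have := ih _ hg
    have he : Θ' + ({P} + Δ₂) = P ::ₘ Θ' + Δ₂ := by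
      simp [Multiset.singleton_add]
    rwa [he]
  case decide =>
    intro Θ' P hmem hpos hfoc _ Δ hd
    rw [decG_zero_inv hd]
    simpa using UnfS.decide hmem hpos hfoc

lemma unfS_backward : ∀ (n : ℕ) (Γ Θ : Multiset (PForm At)),
    (Γ.map PForm.size).sum ≤ n →
    (∀ Δ, DecG Δ Γ → UnfS (Θ + Δ) 0) → UnfS Θ Γ := by
  intro n
  induction n with
  | zero =>
    intro Γ Θ hsz H
    have hΓ : Γ = 0 := by
      rcases Multiset.empty_or_exists_mem Γ with h | ⟨a, ha⟩
      · exact h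
      · exfalso
        obtain ⟨Γ', rfl⟩ := Multiset.exists_cons_of_mem ha
        simp at hsz
        have : 1 ≤ a.size := by cases a <;> simp [PForm.size]
        omega
    subst hΓ
    simpa using H 0 DecG.nil
  | succ n ih =>
    intro Γ Θ hsz H
    rcases Multiset.empty_or_exists_mem Γ with rfl | ⟨A, hA⟩
    · simpa using H 0 DecG.nil
    obtain ⟨Γ', rfl⟩ := Multiset.exists_cons_of_mem hA
    have hsz' : A.size + (Γ'.map PForm.size).sum ≤ n + 1 := by simpa using hsz
    have hstore : ∀ (B : PForm At), DecN {B} B →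
        (B.isPos ∨ ∃ a : At, B = .neg a) →
        (∀ Δ, DecG Δ (B ::ₘ Γ') → UnfS (Θ + Δ) 0) →
        B.size + (Γ'.map PForm.size).sum ≤ n + 1 →
        1 ≤ B.size → UnfS Θ (B ::ₘ Γ') := by
      intro B hdec hBp H hB hB1
      refine UnfS.store hBp (ih Γ' (B ::ₘ Θ) ?_ ?_)
      · omega
      · intro Δ hd
        have := H ({B} + Δ) (DecG.cons hdec hd)
        have he : Θ + ({B} + Δ) = B ::ₘ Θ + Δ := by
          simp [Multiset.singleton_add]
        rwa [he] at this
    cases A with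
    | pos a =>
      exact hstore _ (DecN.shift trivial) (Or.inl trivial) (by simpa using H)
        hsz' (by simp [PForm.size])
    | andP A₁ A₂ =>
      exact hstore _ (DecN.shift trivial) (Or.inl trivial) (by simpa using H)
        hsz' (by simp [PForm.size])
    | orP A₁ A₂ =>
      exact hstore _ (DecN.shift trivial) (Or.inl trivial) (by simpa using H)
        hsz' (by simp [PForm.size])
    | neg a =>
      exact hstore _ (DecN.atom a) (Or.inr ⟨a, rfl⟩) (by simpa using H)
        hsz' (by simp [PForm.size])
    | andN A₁ A₂ =>
      refine UnfS.andN (ih _ Θ ?_ ?_) (ih _ Θ ?_ ?_)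
      · simp [PForm.size] at hsz' ⊢; omega
      · intro Δ hd
        obtain ⟨Δ₁, Δ₂, hn, hg, rfl⟩ := decG_cons_inv hd
        exact H _ (DecG.cons (DecN.andN₁ hn) hg)
      · simp [PForm.size] at hsz' ⊢; omega
      · intro Δ hd
        obtain ⟨Δ₁, Δ₂, hn, hg, rfl⟩ := decG_cons_inv hd
        exact H _ (DecG.cons (DecN.andN₂ hn) hg)
    | orN A₁ A₂ =>
      refine UnfS.orN (ih _ Θ ?_ ?_)
      · simp [PForm.size] at hsz' ⊢; omega
      · intro Δ hd
        obtain ⟨Δ₁, Δ₂, h1, hg₂, rfl⟩ := decG_cons_inv hd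
        obtain ⟨Δ₃, Δ₄, h2, hg, rfl⟩ := decG_cons_inv hg₂
        have := H _ (DecG.cons (DecN.orN h1 h2) hg)
        rwa [show Θ + (Δ₁ + Δ₃ + Δ₄) = Θ + (Δ₁ + (Δ₃ + Δ₄)) by abel] at this

end Aux

/-- Unfocussed derivability of a single formula equals the one-step
asynchronous phase: assuming `Θ` contains only negative atoms and positive
formulae, `⊢ Θ ⇑ A` iff `⊢ Θ,Δ ⇑ ·` for every negative decomposition
`Δ ⊩⁻ A`. -/
theorem unfS_iff_one_step {At : Type} (Θ : Multiset (PForm At)) (A : PForm At)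
    (hΘ : ∀ B ∈ Θ, B.isPos ∨ ∃ a : At, B = PForm.neg a) :
    UnfS Θ {A} ↔ ∀ Δ : Multiset (PForm At), DecN Δ A → UnfS (Θ + Δ) 0 := by
  constructor
  · intro h Δ hd
    exact unfS_forward h Δ (by simpa using DecG.cons hd DecG.nil)
  · intro H
    refine unfS_backward ((({A} : Multiset (PForm At)).map PForm.size).sum) _ _ le_rfl ?_
    intro Δ hd
    rw [show ({A} : Multiset (PForm At)) = A ::ₘ 0 from rfl] at hd
    obtain ⟨Δ₁, Δ₂, hn, hg, rfl⟩ := decG_cons_inv hd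
    rw [decG_zero_inv hg]
    simpa using H Δ₁ hn
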